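/- arXiv:1302.0723 — 4 statements merged into one kernel-verified Lean document; each statement's English description precedes it below -/
import Mathlib

section
/- (Theorem 2: performance guarantee of MEPP(m).) Assume n ≥ m+1. Let x*_{1:n} be a path maximizing the joint entropy H(Z_{x_{1:n}}) over all paths, and let x^E_{1:n} be a path maximizing the MEPP(m) surrogate objective H(Z_{x_{1:m}}) + Σ_{i=m+1}^{n} H(Z_{x_i} | Z_{x_{i−m:i−1}}) over all paths (this is the path returned by the MEPP(m) dynamic program). Then the paths x^E_{1:n} are ε-optimal for the maximum-entropy criterion: H(Z_{x*_{1:n}}) − H(Z_{x^E_{1:n}}) ≤ ε, where ε := [k(n−m)]² · log(1 + ξ²/(η(1+η))). -/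
open Finset

/-- Covariance matrix of the GP: kernel plus sensor noise on the diagonal. -/
noncomputable def SigmaMat {D : Type*} [DecidableEq D] (K : D → D → ℝ) (σn2 : ℝ) :
    Matrix D D ℝ :=
  Matrix.of fun x y => K x y + if x = y then σn2 else 0

/-- Submatrix of covariances between the entries of two finsets of locations. -/
noncomputable def subMat {D : Type*} (Cov : Matrix D D ℝ) (a s : Finset D) :
    Matrix ↥a ↥s ℝ :=
  Matrix.of fun p q => Cov p.1 q.1

/-- Posterior covariance `Σ_{aa|s} = Σ_{aa} - Σ_{as} Σ_{ss}⁻¹ Σ_{sa}`. -/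
noncomputable def postCov {D : Type*} [DecidableEq D] (Cov : Matrix D D ℝ) (a s : Finset D) :
    Matrix ↥a ↥a ℝ :=
  subMat Cov a a - subMat Cov a s * (subMat Cov s s)⁻¹ * subMat Cov s a

/-- Gaussian conditional entropy `H(Z_a | Z_s) = (1/2) log((2πe)^{|a|} det Σ_{aa|s})`. -/
noncomputable def condEnt {D : Type*} [DecidableEq D] (Cov : Matrix D D ℝ) (a s : Finset D) : ℝ :=
  (1/2) * Real.log ((2 * Real.pi * Real.exp 1) ^ a.card * (postCov Cov a s).det)

/-- Gaussian joint entropy `H(Z_a)`. -/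
noncomputable def ent {D : Type*} [DecidableEq D] (Cov : Matrix D D ℝ) (a : Finset D) : ℝ :=
  condEnt Cov a ∅

/-- Mutual information `I(Z_a ; Z_b) = H(Z_a) - H(Z_a | Z_b)`. -/
noncomputable def mutInf {D : Type*} [DecidableEq D] (Cov : Matrix D D ℝ) (a b : Finset D) : ℝ :=
  ent Cov a - condEnt Cov a b

/-- Conditional mutual information `I(Z_a ; Z_b | Z_s) = H(Z_a | Z_s) - H(Z_a | Z_s, Z_b)`. -/
noncomputable def condMutInf {D : Type*} [DecidableEq D] (Cov : Matrix D D ℝ)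
    (a b s : Finset D) : ℝ :=
  condEnt Cov a s - condEnt Cov a (s ∪ b)

/-- Posterior variance `Σ_{yy|A}` of a single location `y`. -/
noncomputable def postVar {D : Type*} [DecidableEq D] (Cov : Matrix D D ℝ) (y : D)
    (A : Finset D) : ℝ :=
  postCov Cov {y} A ⟨y, Finset.mem_singleton_self y⟩ ⟨y, Finset.mem_singleton_self y⟩

/-- Concatenation `x_{i:j}` of the column selections from column `i` to column `j`. -/
def seg {D : Type*} [DecidableEq D] (x : ℕ → Finset D) (i j : ℕ) : Finset D :=
  (Finset.Icc i j).biUnion x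

/-- The set of the `r` locations of column `i`. -/
def column {D : Type*} [Fintype D] (col : D → ℕ) (i : ℕ) : Finset D :=
  Finset.univ.filter (fun p => col p = i)

/-- The complementary vector `u_i` of unobserved locations of column `i` for a path `x`. -/
def ucomp {D : Type*} [Fintype D] [DecidableEq D] (col : D → ℕ) (x : ℕ → Finset D) :
    ℕ → Finset D :=
  fun i => column col i \ x i

/-- A path selects, in every column `i = 1,…,n`, a vector of `k` distinct locations of
column `i`. -/
def IsPath {D : Type*} [Fintype D] (col : D → ℕ) (n k : ℕ) (x : ℕ → Finset D) : Prop :=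
  ∀ i, 1 ≤ i → i ≤ n → x i ⊆ column col i ∧ (x i).card = k


/-!
By the chain rule, `H(Z_{x_{1:n}}) = H(Z_{x_{1:m}}) + ∑_{i>m} H(Z_{x_i} | Z_{x_{1:i-1}})`, and the
MEPP(m) objective replaces each prefix `x_{1:i-1}` by the window `x_{i-m:i-1}`. A posterior
variance is the least residual variance of a linear predictor supported on the conditioning set,
so it decreases as that set grows; hence conditioning reduces entropy and the objective dominates
the entropy of every path: `H(x*) ≤ obj(x*) ≤ obj(x^E)`.

Conversely, for a location `p` of `x_i`, submodularity bounds the variance increase caused by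
forgetting the far columns `x_{1:i-m-1}` by `∑_q (Σ_pp - Σ_{pp|q})`, and kernel decay makes each
summand at most `(σ_s² ξ)² / (σ_s² + σ_n²)`. Since every posterior variance is at least `σ_n²`,
each of the `k(n-m)` locations loses at most `k(n-m) · log(1 + ξ²/(η(1+η))) / 2` in entropy, so
`obj(x^E) ≤ H(x^E) + [k(n-m)]² · log(1 + ξ²/(η(1+η))) / 2`.
-/

open Matrix

section CompleteSquare

variable {ι : Type*} [Fintype ι] [DecidableEq ι] {A : Matrix ι ι ℝ}

lemma Matrix.PosDef.dotProduct_mulVec_sub_inv_mulVec (hA : A.PosDef) (v w : ι → ℝ) :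
    (w - A⁻¹ *ᵥ v) ⬝ᵥ A *ᵥ (w - A⁻¹ *ᵥ v) = w ⬝ᵥ A *ᵥ w - 2 * (w ⬝ᵥ v) + v ⬝ᵥ A⁻¹ *ᵥ v := by
  set z := A⁻¹ *ᵥ v
  have hAz : A *ᵥ z = v := by
    rw [mulVec_mulVec, mul_nonsing_inv _ ((isUnit_iff_isUnit_det A).mp hA.isUnit), one_mulVec]
  have hsymm : z ⬝ᵥ A *ᵥ w = w ⬝ᵥ v := by
    rw [dotProduct_mulVec, ← mulVec_transpose, ← conjTranspose_eq_transpose_of_trivial,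
      hA.isHermitian.eq, hAz, dotProduct_comm]
  rw [sub_dotProduct, mulVec_sub, dotProduct_sub, dotProduct_sub, hAz, hsymm,
    dotProduct_comm z v]
  ring

end CompleteSquare

section GaussianEntropy

variable {D : Type*} {M : Matrix D D ℝ}

lemma posDef_subMat (hM : M.PosDef) (s : Finset D) : (subMat M s s).PosDef :=
  hM.submatrix Subtype.val_injective

variable [DecidableEq D]

lemma det_subMat_union (hM : M.PosDef) {a s : Finset D} (h : Disjoint a s) :
    (subMat M (a ∪ s) (a ∪ s)).det = (subMat M s s).det * (postCov M a s).det := by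
  have := (posDef_subMat hM s).isUnit.invertible
  let e := Equiv.Finset.union a s h
  have hblocks : (subMat M (a ∪ s) (a ∪ s)).submatrix e e =
      fromBlocks (subMat M a a) (subMat M a s) (subMat M s a) (subMat M s s) := by
    ext (i | i) (j | j) <;> rfl
  rw [← det_submatrix_equiv_self e, hblocks, det_fromBlocks₂₂, invOf_eq_nonsing_inv]
  rfl

lemma det_postCov_pos (hM : M.PosDef) {a s : Finset D} (h : Disjoint a s) :
    0 < (postCov M a s).det := by
  have has := (posDef_subMat hM (a ∪ s)).det_pos
  rw [det_subMat_union hM h] at has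
  exact pos_of_mul_pos_right has (posDef_subMat hM s).det_pos.le

lemma condEnt_eq_log_det (hM : M.PosDef) {a s : Finset D} (h : Disjoint a s) :
    condEnt M a s = (a.card * Real.log (2 * Real.pi * Real.exp 1)
      + Real.log (subMat M (a ∪ s) (a ∪ s)).det - Real.log (subMat M s s).det) / 2 := by
  have hs := (posDef_subMat hM s).det_pos
  have hpost := det_postCov_pos hM h
  rw [condEnt, det_subMat_union hM h, Real.log_mul (by positivity) hpost.ne',
    Real.log_mul hs.ne' hpost.ne', Real.log_pow]
  ring

lemma condEnt_union (hM : M.PosDef) {a b s : Finset D} (hab : Disjoint a (b ∪ s))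
    (hbs : Disjoint b s) :
    condEnt M (a ∪ b) s = condEnt M b s + condEnt M a (b ∪ s) := by
  have habs : Disjoint (a ∪ b) s := Finset.disjoint_union_left.mpr
    ⟨Finset.disjoint_of_subset_right Finset.subset_union_right hab, hbs⟩
  have hab' : Disjoint a b := Finset.disjoint_of_subset_right Finset.subset_union_left hab
  rw [condEnt_eq_log_det hM habs, condEnt_eq_log_det hM hbs, condEnt_eq_log_det hM hab,
    Finset.card_union_of_disjoint hab', Finset.union_assoc]
  push_cast
  ring

lemma ent_union (hM : M.PosDef) {a s : Finset D} (h : Disjoint a s) :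
    ent M (a ∪ s) = ent M s + condEnt M a s := by
  simpa [ent] using condEnt_union hM (s := ∅) (by simpa using h) (Finset.disjoint_empty_right s)

lemma condEnt_insert (hM : M.PosDef) {p : D} {a S : Finset D} (hpa : p ∉ a)
    (h : Disjoint (insert p a) S) :
    condEnt M (insert p a) S = condEnt M a S + condEnt M {p} (a ∪ S) := by
  rw [Finset.insert_eq, condEnt_union hM]
  · rw [Finset.disjoint_singleton_left, Finset.mem_union, not_or]
    exact ⟨hpa, Finset.disjoint_left.mp h (Finset.mem_insert_self p a)⟩
  · exact Finset.disjoint_of_subset_left (Finset.subset_insert p a) h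

lemma condEnt_empty (B : Finset D) : condEnt M ∅ B = 0 := by
  simp [condEnt, det_isEmpty]

lemma condEnt_sub_condEnt_le_card_mul (hM : M.PosDef) {c : ℝ} {a B C : Finset D}
    (haB : Disjoint a B) (haC : Disjoint a C)
    (h : ∀ p ∈ a, ∀ A : Finset D, p ∉ A → condEnt M {p} (A ∪ B) - condEnt M {p} (A ∪ C) ≤ c) :
    condEnt M a B - condEnt M a C ≤ a.card * c := by
  induction a using Finset.induction_on with
  | empty => simp [condEnt_empty]
  | insert p a hpa ih =>
    rw [condEnt_insert hM hpa haB, condEnt_insert hM hpa haC, Finset.card_insert_of_notMem hpa]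
    push_cast
    linarith [ih (Finset.disjoint_of_subset_left (Finset.subset_insert p a) haB)
      (Finset.disjoint_of_subset_left (Finset.subset_insert p a) haC)
      (fun q hq => h q (Finset.mem_insert_of_mem hq)), h p (Finset.mem_insert_self p a) a hpa]

lemma condEnt_singleton (p : D) (B : Finset D) :
    condEnt M {p} B = Real.log (2 * Real.pi * Real.exp 1 * postVar M p B) / 2 := by
  rw [condEnt, det_unique, Finset.card_singleton, pow_one]
  ring_nf
  rfl

lemma postVar_pos (hM : M.PosDef) {p : D} {B : Finset D} (hp : p ∉ B) : 0 < postVar M p B := by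
  have := det_postCov_pos hM (Finset.disjoint_singleton_left.mpr hp)
  rwa [det_unique] at this

lemma postVar_eq (q : D) (B : Finset D) :
    postVar M q B = M q q - (fun i : B => M q i) ⬝ᵥ (subMat M B B)⁻¹ *ᵥ (fun i : B => M i q) := by
  simp only [postVar, postCov, Matrix.sub_apply, mul_apply, subMat, of_apply, dotProduct, mulVec,
    Finset.sum_mul, Finset.mul_sum]
  rw [Finset.sum_comm]
  simp only [mul_assoc]

lemma postVar_empty (p : D) : postVar M p ∅ = M p p := by
  simp [postVar_eq]

lemma postVar_singleton (p q : D) : postVar M p {q} = M p p - M p q * M q p / M q q := by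
  simp [postVar_eq, dotProduct, subMat, mulVec_diagonal, Ring.inverse_eq_inv, div_eq_mul_inv,
    mul_assoc, mul_comm]

end GaussianEntropy

section LinearPrediction

variable {D : Type*} [Fintype D] {M : Matrix D D ℝ}

lemma dotProduct_eq_of_support_subset {B : Finset D} {u : D → ℝ} (hu : ∀ d ∉ B, u d = 0)
    (v : D → ℝ) : u ⬝ᵥ v = (fun i : B => u i) ⬝ᵥ (fun i : B => v i) := by
  rw [dotProduct, dotProduct, Finset.sum_coe_sort B (fun d => u d * v d)]
  exact (Finset.sum_subset (Finset.subset_univ B) fun d _ hd => by simp [hu d hd]).symm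

variable [DecidableEq D]

lemma single_sub_dotProduct_mulVec (hM : M.IsHermitian) {B : Finset D} {u : D → ℝ}
    (hu : ∀ d ∉ B, u d = 0) (q : D) :
    (Pi.single q 1 - u) ⬝ᵥ M *ᵥ (Pi.single q 1 - u) =
      M q q - 2 * ((fun i : B => u i) ⬝ᵥ fun i : B => M q i)
        + (fun i : B => u i) ⬝ᵥ subMat M B B *ᵥ (fun i : B => u i) := by
  have hrow : ∀ d, (M *ᵥ u) d = (fun i : B => u i) ⬝ᵥ fun i : B => M d i := fun d => by
    rw [mulVec, dotProduct_comm, dotProduct_eq_of_support_subset hu]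
  have hcol : u ⬝ᵥ M *ᵥ Pi.single q 1 = (fun i : B => u i) ⬝ᵥ fun i : B => M q i := by
    rw [dotProduct_eq_of_support_subset hu]
    congr 1
    ext i
    simpa using hM.apply q i
  have hquad : u ⬝ᵥ M *ᵥ u = (fun i : B => u i) ⬝ᵥ subMat M B B *ᵥ (fun i : B => u i) := by
    rw [dotProduct_eq_of_support_subset hu]
    congr 1
    ext i
    rw [hrow]
    simp only [mulVec, subMat, of_apply, dotProduct, mul_comm]
  rw [sub_dotProduct, mulVec_sub, dotProduct_sub, dotProduct_sub, single_one_dotProduct,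
    single_one_dotProduct, hrow, hcol, hquad, mulVec_single_one]
  simp only [col_apply]
  ring

/- The right-hand side is the variance of the residual `Z_q - ∑_d u_d Z_d`. -/
lemma postVar_le_dotProduct_mulVec (hM : M.PosDef) {B : Finset D} {u : D → ℝ}
    (hu : ∀ d ∉ B, u d = 0) (q : D) :
    postVar M q B ≤ (Pi.single q 1 - u) ⬝ᵥ M *ᵥ (Pi.single q 1 - u) := by
  have hA := posDef_subMat hM B
  have hv : (fun i : B => M i q) = fun i : B => M q i := funext fun i => by
    simpa using hM.isHermitian.apply q i
  set v := fun i : B => M q i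
  set w := fun i : B => u i
  have hsq := hA.dotProduct_mulVec_sub_inv_mulVec v w
  set z := (subMat M B B)⁻¹ *ᵥ v
  have hnonneg : 0 ≤ (w - z) ⬝ᵥ subMat M B B *ᵥ (w - z) := by
    simpa using hA.posSemidef.dotProduct_mulVec_nonneg (w - z)
  rw [single_sub_dotProduct_mulVec hM.isHermitian hu, postVar_eq, hv]
  linarith

lemma exists_dotProduct_mulVec_eq_postVar (hM : M.PosDef) (q : D) (B : Finset D) :
    ∃ u : D → ℝ, (∀ d ∉ B, u d = 0) ∧
      (Pi.single q 1 - u) ⬝ᵥ M *ᵥ (Pi.single q 1 - u) = postVar M q B := by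
  have hA := posDef_subMat hM B
  have hv : (fun i : B => M i q) = fun i : B => M q i := funext fun i => by
    simpa using hM.isHermitian.apply q i
  set v := fun i : B => M q i
  set z := (subMat M B B)⁻¹ *ᵥ v
  have hu : ∀ d ∉ B, Function.extend Subtype.val z 0 d = 0 := fun d hd =>
    Function.extend_apply' _ _ _ fun ⟨i, hi⟩ => hd (hi ▸ i.2)
  have hrestrict : (fun i : B => Function.extend Subtype.val z 0 i) = z :=
    funext (Subtype.val_injective.extend_apply z 0)
  refine ⟨_, hu, ?_⟩
  have hsq := hA.dotProduct_mulVec_sub_inv_mulVec v z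
  rw [sub_self, zero_dotProduct] at hsq
  rw [single_sub_dotProduct_mulVec hM.isHermitian hu, hrestrict, postVar_eq, hv]
  linarith

lemma postVar_le_of_subset (hM : M.PosDef) (q : D) {B C : Finset D} (h : B ⊆ C) :
    postVar M q C ≤ postVar M q B := by
  obtain ⟨u, hu, hB⟩ := exists_dotProduct_mulVec_eq_postVar hM q B
  exact hB ▸ postVar_le_dotProduct_mulVec hM (fun d hd => hu d fun hdB => hd (h hdB)) q

lemma condEnt_le_of_subset (hM : M.PosDef) {a B C : Finset D} (hBC : B ⊆ C) (ha : Disjoint a C) :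
    condEnt M a C ≤ condEnt M a B := by
  suffices condEnt M a C - condEnt M a B ≤ a.card * 0 by rw [mul_zero] at this; linarith
  refine condEnt_sub_condEnt_le_card_mul hM ha (Finset.disjoint_of_subset_right hBC ha)
    fun p hp A hpA => ?_
  have hpC : p ∉ C := Finset.disjoint_left.mp ha hp
  have hpos := postVar_pos hM (p := p) (B := A ∪ C) (by simp [hpC, hpA])
  have hle := postVar_le_of_subset hM p (Finset.union_subset_union_right hBC (s := A))
  rw [condEnt_singleton, condEnt_singleton, sub_nonpos]
  gcongr

end LinearPrediction

section NoisyKernel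

variable {D : Type*} [DecidableEq D] {K : D → D → ℝ} {σ : ℝ}

lemma sigmaMat_eq_add_smul_one : SigmaMat K σ = of K + σ • 1 := by
  ext p q
  by_cases h : p = q <;> simp [SigmaMat, one_apply, h]

lemma posDef_sigmaMat (hK : (of K).PosSemidef) (hσ : 0 < σ) : (SigmaMat K σ).PosDef := by
  rw [sigmaMat_eq_add_smul_one]
  exact PosDef.posSemidef_add hK (PosDef.one.smul hσ)

lemma le_postVar_sigmaMat [Fintype D] (hK : (of K).PosSemidef) (hσ : 0 < σ) {q : D}
    {B : Finset D} (hq : q ∉ B) : σ ≤ postVar (SigmaMat K σ) q B := by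
  obtain ⟨u, hu, hB⟩ := exists_dotProduct_mulVec_eq_postVar (posDef_sigmaMat hK hσ) q B
  set y := Pi.single q 1 - u
  have hyq : y q = 1 := by simp [y, hu q hq]
  have hKy : 0 ≤ y ⬝ᵥ of K *ᵥ y := by simpa using hK.dotProduct_mulVec_nonneg y
  have hyy : y q ^ 2 ≤ y ⬝ᵥ y := by
    simpa [dotProduct, sq] using
      Finset.single_le_sum (fun d _ => mul_self_nonneg (y d)) (Finset.mem_univ q)
  rw [← hB, sigmaMat_eq_add_smul_one, add_mulVec, smul_mulVec, one_mulVec, dotProduct_add,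
    dotProduct_smul, smul_eq_mul]
  rw [hyq] at hyy
  nlinarith

lemma postVar_empty_sub_postVar_singleton_sigmaMat (hK : (of K).IsHermitian) {σs : ℝ}
    (hKdiag : ∀ p, K p p = σs) {p q : D} (hpq : p ≠ q) :
    postVar (SigmaMat K σ) p ∅ - postVar (SigmaMat K σ) p {q} = K p q ^ 2 / (σs + σ) := by
  have hqp : K q p = K p q := by simpa using (hK.apply q p).symm
  simp [postVar_empty, postVar_singleton, SigmaMat, hpq, hpq.symm, hKdiag, hqp, sq]

end NoisyKernel

section Submodularity

variable {D : Type*} [DecidableEq D] {M : Matrix D D ℝ}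

def VarianceReductionSubmodular (M : Matrix D D ℝ) : Prop :=
  ∀ (p q : D) (A : Finset D), p ∉ A → q ∉ A → p ≠ q →
    postVar M p A - postVar M p (insert q A) ≤ postVar M p ∅ - postVar M p {q}

namespace VarianceReductionSubmodular

lemma postVar_sub_postVar_union_le (hsub : VarianceReductionSubmodular M) {p : D}
    {B : Finset D} (hpB : p ∉ B) {E : Finset D} (hEB : Disjoint E B) (hpE : p ∉ E) :
    postVar M p B - postVar M p (B ∪ E) ≤ ∑ q ∈ E, (postVar M p ∅ - postVar M p {q}) := by
  induction E using Finset.induction_on with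
  | empty => simp
  | insert q E hqE ih =>
    have hqB : q ∉ B := Finset.disjoint_left.mp hEB (Finset.mem_insert_self q E)
    have hpq : p ≠ q := fun h => hpE (h ▸ Finset.mem_insert_self q E)
    have hpE' : p ∉ E := fun h => hpE (Finset.mem_insert_of_mem h)
    have hstep := hsub p q (B ∪ E) (by simp [hpB, hpE']) (by simp [hqB, hqE]) hpq
    rw [Finset.union_insert, Finset.sum_insert hqE]
    linarith [ih (Finset.disjoint_of_subset_left (Finset.subset_insert q E) hEB) hpE']

lemma condEnt_singleton_sub_condEnt_singleton_le (hM : M.PosDef)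
    (hsub : VarianceReductionSubmodular M) {σ δ : ℝ} (hσ : 0 < σ) (hδ : 0 ≤ δ) {p : D}
    {B C : Finset D} (hBC : B ⊆ C) (hpC : p ∉ C) (hfloor : σ ≤ postVar M p C)
    (hfar : ∀ q ∈ C \ B, postVar M p ∅ - postVar M p {q} ≤ δ) :
    condEnt M {p} B - condEnt M {p} C ≤ (C \ B).card * Real.log (1 + δ / σ) / 2 := by
  set N := (C \ B).card
  set t := δ / σ
  have ht : 0 ≤ t := div_nonneg hδ hσ.le
  have hpC' : 0 < postVar M p C := hσ.trans_le hfloor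
  have hdrop : postVar M p B - postVar M p C ≤ N * δ := by
    have htel := hsub.postVar_sub_postVar_union_le (fun h => hpC (hBC h)) Finset.sdiff_disjoint
      (fun h => hpC (Finset.mem_sdiff.mp h).1)
    rw [Finset.union_sdiff_of_subset hBC] at htel
    have hsum := Finset.sum_le_sum hfar
    rw [Finset.sum_const, nsmul_eq_mul] at hsum
    linarith
  have hratio : postVar M p B ≤ postVar M p C * (1 + t) ^ N := by
    have hbern : 1 + N * t ≤ (1 + t) ^ N := one_add_mul_le_pow (by linarith) N
    have hNδ : (N : ℝ) * δ = σ * (N * t) := by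
      simp only [t]
      field_simp
    have : σ * (N * t) ≤ postVar M p C * (N * t) := by gcongr
    nlinarith
  have hpB := postVar_pos hM (p := p) (fun h => hpC (hBC h))
  rw [condEnt_singleton, condEnt_singleton]
  have hlog : Real.log (2 * Real.pi * Real.exp 1 * postVar M p B)
      ≤ Real.log (2 * Real.pi * Real.exp 1 * postVar M p C) + N * Real.log (1 + t) := by
    rw [← Real.log_pow, ← Real.log_mul (by positivity) (by positivity)]
    refine Real.log_le_log (by positivity) ?_
    exact (mul_le_mul_of_nonneg_left hratio (by positivity)).trans_eq (by ring)
  linarith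

lemma condEnt_sub_condEnt_le (hM : M.PosDef) (hsub : VarianceReductionSubmodular M)
    {σ δ : ℝ} (hσ : 0 < σ) (hδ : 0 ≤ δ) (hfloor : ∀ p A, p ∉ A → σ ≤ postVar M p A)
    {a B C : Finset D} (hBC : B ⊆ C) (ha : Disjoint a C)
    (hfar : ∀ p ∈ a, ∀ q ∈ C \ B, postVar M p ∅ - postVar M p {q} ≤ δ) :
    condEnt M a B - condEnt M a C ≤ a.card * ((C \ B).card * Real.log (1 + δ / σ) / 2) := by
  refine condEnt_sub_condEnt_le_card_mul hM (Finset.disjoint_of_subset_right hBC ha) ha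
    fun p hp A hpA => ?_
  have hpAC : p ∉ A ∪ C := by simp [hpA, Finset.disjoint_left.mp ha hp]
  have hnew : (A ∪ C) \ (A ∪ B) ⊆ C \ B := by
    intro q
    simp only [Finset.mem_sdiff, Finset.mem_union]
    tauto
  have hlog : 0 ≤ Real.log (1 + δ / σ) :=
    Real.log_nonneg (le_add_of_nonneg_right (div_nonneg hδ hσ.le))
  calc condEnt M {p} (A ∪ B) - condEnt M {p} (A ∪ C)
      ≤ ((A ∪ C) \ (A ∪ B)).card * Real.log (1 + δ / σ) / 2 :=
        hsub.condEnt_singleton_sub_condEnt_singleton_le hM hσ hδ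
          (Finset.union_subset_union_right hBC) hpAC (hfloor p _ hpAC)
          fun q hq => hfar p hp q (hnew hq)
    _ ≤ (C \ B).card * Real.log (1 + δ / σ) / 2 := by
        gcongr

end VarianceReductionSubmodular

end Submodularity

section Paths

variable {D : Type*} {col : D → ℕ} {n k : ℕ} {x : ℕ → Finset D}

lemma IsPath.col_eq [Fintype D] (hx : IsPath col n k x) {j : ℕ} (hj1 : 1 ≤ j) (hjn : j ≤ n)
    {q : D} (hq : q ∈ x j) : col q = j :=
  (Finset.mem_filter.mp ((hx j hj1 hjn).1 hq)).2

variable [DecidableEq D]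

lemma mem_seg {a b : ℕ} {q : D} : q ∈ seg x a b ↔ ∃ j ∈ Finset.Icc a b, q ∈ x j :=
  Finset.mem_biUnion

lemma seg_add_one {a b : ℕ} (h : a ≤ b + 1) : seg x a (b + 1) = x (b + 1) ∪ seg x a b := by
  rw [seg, ← Finset.insert_Icc_right_eq_Icc_add_one h, Finset.biUnion_insert, seg]

lemma seg_subset_seg {a a' b : ℕ} (h : a' ≤ a) : seg x a b ⊆ seg x a' b :=
  Finset.biUnion_subset_biUnion_of_subset_left _ (Finset.Icc_subset_Icc_left h)

lemma seg_sdiff_seg_subset (a b c : ℕ) : seg x a c \ seg x b c ⊆ seg x a (b - 1) := by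
  intro q hq
  obtain ⟨hqac, hqbc⟩ := Finset.mem_sdiff.mp hq
  obtain ⟨j, hj, hqj⟩ := mem_seg.mp hqac
  rw [Finset.mem_Icc] at hj
  refine mem_seg.mpr ⟨j, Finset.mem_Icc.mpr ⟨hj.1, ?_⟩, hqj⟩
  by_contra hjb
  exact hqbc (mem_seg.mpr ⟨j, Finset.mem_Icc.mpr ⟨by omega, hj.2⟩, hqj⟩)

variable [Fintype D]

namespace IsPath

lemma col_le_of_mem_seg (hx : IsPath col n k x) {a b : ℕ} (ha : 1 ≤ a) (hbn : b ≤ n) {q : D}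
    (hq : q ∈ seg x a b) : col q ≤ b := by
  obtain ⟨j, hj, hqj⟩ := mem_seg.mp hq
  rw [Finset.mem_Icc] at hj
  rw [hx.col_eq (ha.trans hj.1) (hj.2.trans hbn) hqj]
  exact hj.2

lemma disjoint_seg (hx : IsPath col n k x) {i a b : ℕ} (ha : 1 ≤ a) (hbi : b < i) (hin : i ≤ n) :
    Disjoint (x i) (seg x a b) :=
  Finset.disjoint_left.mpr fun p hp hp' => by
    have := hx.col_le_of_mem_seg ha (by omega) hp'
    rw [hx.col_eq (by omega) hin hp] at this
    omega

lemma card_seg_le (hx : IsPath col n k x) {b : ℕ} (hbn : b ≤ n) : (seg x 1 b).card ≤ k * b := by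
  have := Finset.card_biUnion_le_card_mul (Finset.Icc 1 b) x k fun j hj => by
    rw [Finset.mem_Icc] at hj
    exact (hx j hj.1 (hj.2.trans hbn)).2.le
  simpa [seg, mul_comm] using this

variable {M : Matrix D D ℝ}

lemma ent_seg_eq (hx : IsPath col n k x) (hM : M.PosDef) {m N : ℕ} (hmN : m ≤ N) (hN : N ≤ n) :
    ent M (seg x 1 N) =
      ent M (seg x 1 m) + ∑ i ∈ Finset.Icc (m + 1) N, condEnt M (x i) (seg x 1 (i - 1)) := by
  induction N, hmN using Nat.le_induction with
  | base => simp
  | succ N hmN ih =>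
    rw [seg_add_one (by omega), ent_union hM (hx.disjoint_seg le_rfl (by omega) hN),
      ih (by omega), Finset.sum_Icc_succ_top (by omega), Nat.add_sub_cancel]
    ring

end IsPath

end Paths

section Mepp

variable {D : Type*} [Fintype D] [DecidableEq D] {M : Matrix D D ℝ} {col : D → ℕ} {n k m : ℕ}
  {x : ℕ → Finset D}

noncomputable def meppObjective (M : Matrix D D ℝ) (m n : ℕ) (x : ℕ → Finset D) : ℝ :=
  ent M (seg x 1 m) + ∑ i ∈ Finset.Icc (m + 1) n, condEnt M (x i) (seg x (i - m) (i - 1))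

namespace IsPath

lemma ent_seg_le_meppObjective (hx : IsPath col n k x) (hM : M.PosDef) (hmn : m ≤ n) :
    ent M (seg x 1 n) ≤ meppObjective M m n x := by
  rw [hx.ent_seg_eq hM hmn le_rfl, meppObjective]
  gcongr with i hi
  rw [Finset.mem_Icc] at hi
  exact condEnt_le_of_subset hM (seg_subset_seg (by omega))
    (hx.disjoint_seg le_rfl (by omega) hi.2)

variable {σ δ : ℝ}

lemma condEnt_window_sub_condEnt_prefix_le (hx : IsPath col n k x) (hM : M.PosDef)
    (hsub : VarianceReductionSubmodular M) (hσ : 0 < σ) (hδ : 0 ≤ δ)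
    (hfloor : ∀ p A, p ∉ A → σ ≤ postVar M p A)
    (hfar : ∀ p q, col q + (m + 1) ≤ col p → postVar M p ∅ - postVar M p {q} ≤ δ)
    {i : ℕ} (hi : i ∈ Finset.Icc (m + 1) n) :
    condEnt M (x i) (seg x (i - m) (i - 1)) - condEnt M (x i) (seg x 1 (i - 1))
      ≤ k * ((k * (n - m) : ℕ) * Real.log (1 + δ / σ) / 2) := by
  rw [Finset.mem_Icc] at hi
  have hfar_seg : ∀ p ∈ x i, ∀ q ∈ seg x 1 (i - 1) \ seg x (i - m) (i - 1),
      postVar M p ∅ - postVar M p {q} ≤ δ := fun p hp q hq => by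
    have hq := hx.col_le_of_mem_seg le_rfl (by omega) (seg_sdiff_seg_subset _ _ _ hq)
    exact hfar p q (by rw [hx.col_eq (by omega) hi.2 hp]; omega)
  have hcard : (seg x 1 (i - 1) \ seg x (i - m) (i - 1)).card ≤ k * (n - m) :=
    calc _ ≤ (seg x 1 (i - m - 1)).card := Finset.card_le_card (seg_sdiff_seg_subset _ _ _)
      _ ≤ k * (i - m - 1) := hx.card_seg_le (by omega)
      _ ≤ k * (n - m) := Nat.mul_le_mul_left _ (by omega)
  have hlog : 0 ≤ Real.log (1 + δ / σ) :=
    Real.log_nonneg (le_add_of_nonneg_right (div_nonneg hδ hσ.le))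
  calc _ ≤ (x i).card * ((seg x 1 (i - 1) \ seg x (i - m) (i - 1)).card
          * Real.log (1 + δ / σ) / 2) :=
        hsub.condEnt_sub_condEnt_le hM hσ hδ hfloor (seg_subset_seg (by omega))
          (hx.disjoint_seg le_rfl (by omega) hi.2) hfar_seg
    _ ≤ _ := by
        rw [(hx i (by omega) hi.2).2]
        gcongr

lemma meppObjective_le_ent_seg_add (hx : IsPath col n k x) (hM : M.PosDef)
    (hsub : VarianceReductionSubmodular M) (hσ : 0 < σ) (hδ : 0 ≤ δ)
    (hfloor : ∀ p A, p ∉ A → σ ≤ postVar M p A)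
    (hfar : ∀ p q, col q + (m + 1) ≤ col p → postVar M p ∅ - postVar M p {q} ≤ δ)
    (hmn : m ≤ n) :
    meppObjective M m n x
      ≤ ent M (seg x 1 n) + (k * ((n : ℝ) - m)) ^ 2 * Real.log (1 + δ / σ) / 2 := by
  have hsum := Finset.sum_le_sum fun i hi =>
    hx.condEnt_window_sub_condEnt_prefix_le hM hsub hσ hδ hfloor hfar hi
  rw [Finset.sum_sub_distrib, Finset.sum_const, Nat.card_Icc, nsmul_eq_mul] at hsum
  have hcount : ((n + 1 - (m + 1) : ℕ) : ℝ) * (k * ((k * (n - m) : ℕ) * Real.log (1 + δ / σ) / 2))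
      = (k * ((n : ℝ) - m)) ^ 2 * Real.log (1 + δ / σ) / 2 := by
    rw [Nat.add_sub_add_right]
    push_cast [Nat.cast_sub hmn]
    ring
  rw [hx.ent_seg_eq hM hmn le_rfl, meppObjective]
  linarith

end IsPath

end Mepp

theorem mepp_performance_guarantee_general
    {D : Type*} [Fintype D] [DecidableEq D]
    (n k m : ℕ) (col : D → ℕ)
    (K : D → D → ℝ) (σs2 σn2 ξ : ℝ)
    (hs : 0 < σs2) (hn : 0 < σn2)
    (hKpsd : (Matrix.of K).PosSemidef)
    (hKdiag : ∀ p : D, K p p = σs2)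
    (hdecay : ∀ p q : D, (m : ℤ) + 1 ≤ |(col p : ℤ) - (col q : ℤ)| → |K p q| ≤ σs2 * ξ)
    (hsub : ∀ (p q : D) (A : Finset D), p ∉ A → q ∉ A → p ≠ q →
      postVar (SigmaMat K σn2) p A - postVar (SigmaMat K σn2) p (insert q A)
        ≤ postVar (SigmaMat K σn2) p ∅ - postVar (SigmaMat K σn2) p {q})
    (hnm : m + 1 ≤ n)
    (xstar xE : ℕ → Finset D)
    (hxstar : IsPath col n k xstar)
    (hxE : IsPath col n k xE)
    (hE : ∀ x : ℕ → Finset D, IsPath col n k x →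
      ent (SigmaMat K σn2) (seg x 1 m)
          + ∑ i ∈ Finset.Icc (m + 1) n, condEnt (SigmaMat K σn2) (x i) (seg x (i - m) (i - 1))
        ≤ ent (SigmaMat K σn2) (seg xE 1 m)
          + ∑ i ∈ Finset.Icc (m + 1) n,
              condEnt (SigmaMat K σn2) (xE i) (seg xE (i - m) (i - 1))) :
    ent (SigmaMat K σn2) (seg xstar 1 n) - ent (SigmaMat K σn2) (seg xE 1 n)
      ≤ ((k : ℝ) * ((n : ℝ) - (m : ℝ))) ^ 2 * Real.log (1 + ξ ^ 2 / ((σn2 / σs2) * (1 + σn2 / σs2))) := by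
  have hM := posDef_sigmaMat hKpsd hn
  have hfloor : ∀ p A, p ∉ A → σn2 ≤ postVar (SigmaMat K σn2) p A :=
    fun _ _ => le_postVar_sigmaMat hKpsd hn
  set δ := (σs2 * ξ) ^ 2 / (σs2 + σn2)
  have hfar : ∀ p q, col q + (m + 1) ≤ col p →
      postVar (SigmaMat K σn2) p ∅ - postVar (SigmaMat K σn2) p {q} ≤ δ := fun p q hpq => by
    rw [postVar_empty_sub_postVar_singleton_sigmaMat hKpsd.isHermitian hKdiag
      (ne_of_apply_ne col (by omega))]
    have hK := hdecay p q (by rw [abs_of_nonneg (by omega)]; omega)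
    exact div_le_div_of_nonneg_right (sq_le_sq' (neg_le_of_abs_le hK) (le_of_abs_le hK))
      (by positivity)
  have hδ : δ / σn2 = ξ ^ 2 / ((σn2 / σs2) * (1 + σn2 / σs2)) := by
    simp only [δ]
    field_simp
  have hlog : 0 ≤ Real.log (1 + δ / σn2) :=
    Real.log_nonneg (le_add_of_nonneg_right (by positivity))
  calc _ ≤ meppObjective (SigmaMat K σn2) m n xstar - ent (SigmaMat K σn2) (seg xE 1 n) := by
        linarith [hxstar.ent_seg_le_meppObjective hM (m := m) (by omega)]
    _ ≤ meppObjective (SigmaMat K σn2) m n xE - ent (SigmaMat K σn2) (seg xE 1 n) :=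
        sub_le_sub_right (hE xstar hxstar) _
    _ ≤ (k * ((n : ℝ) - m)) ^ 2 * Real.log (1 + δ / σn2) / 2 := by
        linarith [hxE.meppObjective_le_ent_seg_add hM hsub hn (by positivity) hfloor hfar
          (by omega)]
    _ ≤ _ := by
        rw [← hδ]
        linarith [mul_nonneg (sq_nonneg (k * ((n : ℝ) - m))) hlog]

/-- **Theorem 2 (performance guarantee of MEPP(m)).** -/
theorem mepp_performance_guarantee
    {D : Type*} [Fintype D] [DecidableEq D]
    (r n k m : ℕ) (col : D → ℕ)
    (K : D → D → ℝ) (σs2 σn2 l1 ξ : ℝ)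
    (hr : 1 ≤ r) (hk1 : 1 ≤ k) (hkr : k ≤ r) (hm : 1 ≤ m)
    (hs : 0 < σs2) (hn : 0 < σn2) (hl1 : 0 < l1)
    (hξ : ξ = Real.exp (-((m : ℝ) + 1) ^ 2 / (2 * l1 ^ 2)))
    (hKsymm : ∀ p q : D, K p q = K q p)
    (hKpsd : (Matrix.of K).PosSemidef)
    (hKdiag : ∀ p : D, K p p = σs2)
    (hcol : ∀ p : D, 1 ≤ col p ∧ col p ≤ n)
    (hcolcard : ∀ i : ℕ, 1 ≤ i → i ≤ n → (column col i).card = r)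
    (hdecay : ∀ p q : D, (m : ℤ) + 1 ≤ |(col p : ℤ) - (col q : ℤ)| → |K p q| ≤ σs2 * ξ)
    (hsub : ∀ (p q : D) (A : Finset D), p ∉ A → q ∉ A → p ≠ q →
      postVar (SigmaMat K σn2) p A - postVar (SigmaMat K σn2) p (insert q A)
        ≤ postVar (SigmaMat K σn2) p ∅ - postVar (SigmaMat K σn2) p {q})
    (hnm : m + 1 ≤ n)
    (xstar xE : ℕ → Finset D)
    (hxstar : IsPath col n k xstar)
    (hstar : ∀ x : ℕ → Finset D, IsPath col n k x →
      ent (SigmaMat K σn2) (seg x 1 n) ≤ ent (SigmaMat K σn2) (seg xstar 1 n))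
    (hxE : IsPath col n k xE)
    (hE : ∀ x : ℕ → Finset D, IsPath col n k x →
      ent (SigmaMat K σn2) (seg x 1 m)
          + ∑ i ∈ Finset.Icc (m + 1) n, condEnt (SigmaMat K σn2) (x i) (seg x (i - m) (i - 1))
        ≤ ent (SigmaMat K σn2) (seg xE 1 m)
          + ∑ i ∈ Finset.Icc (m + 1) n,
              condEnt (SigmaMat K σn2) (xE i) (seg xE (i - m) (i - 1))) :
    ent (SigmaMat K σn2) (seg xstar 1 n) - ent (SigmaMat K σn2) (seg xE 1 n)
      ≤ ((k : ℝ) * ((n : ℝ) - (m : ℝ))) ^ 2 * Real.log (1 + ξ ^ 2 / ((σn2 / σs2) * (1 + σn2 / σs2))) :=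
  mepp_performance_guarantee_general n k m col K σs2 σn2 ξ hs hn hKpsd hKdiag hdecay hsub hnm xstar
    xE hxstar hxE hE
end

section
/- (Lemma: correctness of the M²IPP(m) dynamic program.) Assume n ≥ 2m+1. Define the value functions by backward recursion: U_n(x_{n−2m:n−1}) := max over x_n of I(Z_{x_{n−m:n}}; Z_{u_{n−2m:n}} | Z_{x_{n−2m:n−m−1}}), and for i = 2m+1,…,n−1, U_i(x_{i−2m:i−1}) := max over x_i of [ I(Z_{x_{i−m}}; Z_{u_{i−2m:i}} | Z_{x_{i−2m:i−m−1}}) + U_{i+1}(x_{i−2m+1:i}) ]. Let x^M_{1:2m} be a maximizer of I(Z_{x_{1:m}}; Z_{u_{1:2m}}) + U_{2m+1}(x_{1:2m}) over all x_{1:2m}, and for i = 2m+1,…,n let x^M_i be a maximizer attaining U_i(x^M_{i−2m:i−1}). Then for every path x_{1:n}: I(Z_{x^M_{1:m}}; Z_{u^M_{1:2m}}) + Σ_{i=2m+1}^{n−1} I(Z_{x^M_{i−m}}; Z_{u^M_{i−2m:i}} | Z_{x^M_{i−2m:i−m−1}}) + I(Z_{x^M_{n−m:n}}; Z_{u^M_{n−2m:n}}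 | Z_{x^M_{n−2m:n−m−1}}) ≥ I(Z_{x_{1:m}}; Z_{u_{1:2m}}) + Σ_{i=2m+1}^{n−1} I(Z_{x_{i−m}}; Z_{u_{i−2m:i}} | Z_{x_{i−2m:i−m−1}}) + I(Z_{x_{n−m:n}}; Z_{u_{n−2m:n}} | Z_{x_{n−2m:n−m−1}}), where u^M_i denotes the complement of x^M_i in column i. -/
open Finset

/-- **Lemma (correctness of the M²IPP(m) dynamic program).** -/
theorem m2ipp_dp_correctness
    {D : Type*} [Fintype D] [DecidableEq D]
    (r n k m : ℕ) (col : D → ℕ)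
    (K : D → D → ℝ) (σn2 σs2 : ℝ)
    (hr : 1 ≤ r) (hk1 : 1 ≤ k) (hkr : k ≤ r) (hm : 1 ≤ m)
    (hs : 0 < σs2) (hn : 0 < σn2)
    (hKsymm : ∀ p q : D, K p q = K q p)
    (hKpsd : (Matrix.of K).PosSemidef)
    (hKdiag : ∀ p : D, K p p = σs2)
    (hcol : ∀ p : D, 1 ≤ col p ∧ col p ≤ n)
    (hcolcard : ∀ i : ℕ, 1 ≤ i → i ≤ n → (column col i).card = r)
    (hnm : 2 * m + 1 ≤ n)
    (U : ℕ → (ℕ → Finset D) → ℝ)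
    (hUn : ∀ h : ℕ → Finset D,
      IsGreatest
        ((fun c => condMutInf (SigmaMat K σn2) (seg (Function.update h n c) (n - m) n)
            (seg (ucomp col (Function.update h n c)) (n - 2 * m) n)
            (seg (Function.update h n c) (n - 2 * m) (n - m - 1))) ''
          ((column col n).powersetCard k : Finset (Finset D)))
        (U n h))
    (hUi : ∀ i : ℕ, 2 * m + 1 ≤ i → i < n → ∀ h : ℕ → Finset D,
      IsGreatest
        ((fun c => condMutInf (SigmaMat K σn2) ((Function.update h i c) (i - m))
            (seg (ucomp col (Function.update h i c)) (i - 2 * m) i)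
            (seg (Function.update h i c) (i - 2 * m) (i - m - 1))
            + U (i + 1) (Function.update h i c)) ''
          ((column col i).powersetCard k : Finset (Finset D)))
        (U i h))
    (xM : ℕ → Finset D) (hxM : IsPath col n k xM)
    (hMfirst : ∀ y : ℕ → Finset D, IsPath col n k y →
      mutInf (SigmaMat K σn2) (seg y 1 m) (seg (ucomp col y) 1 (2 * m)) + U (2 * m + 1) y
        ≤ mutInf (SigmaMat K σn2) (seg xM 1 m) (seg (ucomp col xM) 1 (2 * m))
            + U (2 * m + 1) xM)
    (hMn : U n xM = condMutInf (SigmaMat K σn2) (seg xM (n - m) n)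
      (seg (ucomp col xM) (n - 2 * m) n) (seg xM (n - 2 * m) (n - m - 1)))
    (hMi : ∀ i : ℕ, 2 * m + 1 ≤ i → i < n →
      U i xM = condMutInf (SigmaMat K σn2) (xM (i - m)) (seg (ucomp col xM) (i - 2 * m) i)
          (seg xM (i - 2 * m) (i - m - 1)) + U (i + 1) xM) :
    ∀ x : ℕ → Finset D, IsPath col n k x →
      mutInf (SigmaMat K σn2) (seg x 1 m) (seg (ucomp col x) 1 (2 * m))
          + ∑ i ∈ Finset.Icc (2 * m + 1) (n - 1),
              condMutInf (SigmaMat K σn2) (x (i - m)) (seg (ucomp col x) (i - 2 * m) i)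
                (seg x (i - 2 * m) (i - m - 1))
          + condMutInf (SigmaMat K σn2) (seg x (n - m) n) (seg (ucomp col x) (n - 2 * m) n)
              (seg x (n - 2 * m) (n - m - 1))
        ≤ mutInf (SigmaMat K σn2) (seg xM 1 m) (seg (ucomp col xM) 1 (2 * m))
          + ∑ i ∈ Finset.Icc (2 * m + 1) (n - 1),
              condMutInf (SigmaMat K σn2) (xM (i - m)) (seg (ucomp col xM) (i - 2 * m) i)
                (seg xM (i - 2 * m) (i - m - 1))
          + condMutInf (SigmaMat K σn2) (seg xM (n - m) n) (seg (ucomp col xM) (n - 2 * m) n)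
              (seg xM (n - 2 * m) (n - m - 1)) := by
  intro x hx
  have hnpos : 1 ≤ n := by omega
  have key : ∀ d j, n - j ≤ d → 2 * m + 1 ≤ j → j ≤ n →
      ((∀ y : ℕ → Finset D, IsPath col n k y →
        (∑ i ∈ Finset.Icc j (n - 1),
            condMutInf (SigmaMat K σn2) (y (i - m)) (seg (ucomp col y) (i - 2 * m) i)
              (seg y (i - 2 * m) (i - m - 1)))
          + condMutInf (SigmaMat K σn2) (seg y (n - m) n) (seg (ucomp col y) (n - 2 * m) n)
              (seg y (n - 2 * m) (n - m - 1)) ≤ U j y)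
      ∧ ((∑ i ∈ Finset.Icc j (n - 1),
            condMutInf (SigmaMat K σn2) (xM (i - m)) (seg (ucomp col xM) (i - 2 * m) i)
              (seg xM (i - 2 * m) (i - m - 1)))
          + condMutInf (SigmaMat K σn2) (seg xM (n - m) n) (seg (ucomp col xM) (n - 2 * m) n)
              (seg xM (n - 2 * m) (n - m - 1)) = U j xM)) := by
    intro d
    induction d with
    | zero =>
      intro j hd h1 h2
      have hj : j = n := by omega
      have hempty : Finset.Icc j (n - 1) = ∅ := Finset.Icc_eq_empty (by omega)
      rw [hempty, hj]
      simp only [Finset.sum_empty, zero_add]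
      refine ⟨fun y hy => ?_, hMn.symm⟩
      have hyn := hy n (by omega) le_rfl
      have hmem : y n ∈ ((column col n).powersetCard k : Finset (Finset D)) :=
        Finset.mem_powersetCard.mpr ⟨hyn.1, hyn.2⟩
      have hub := (hUn y).2 (Set.mem_image_of_mem _ (Finset.mem_coe.mpr hmem))
      simpa [Function.update_eq_self] using hub
    | succ d ih =>
      intro j hd h1 h2
      by_cases hjn : j = n
      · exact ih j (by omega) h1 h2
      · have hjn' : j < n := lt_of_le_of_ne h2 hjn
        have hjle : j ≤ n - 1 := by omega
        have hnotmem : j ∉ Finset.Icc (j + 1) (n - 1) := by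
          simp only [Finset.mem_Icc, not_and]; omega
        have hsplit : Finset.Icc j (n - 1) = insert j (Finset.Icc (j + 1) (n - 1)) := by
          ext a; simp only [Finset.mem_Icc, Finset.mem_insert]; omega
        have hih := ih (j + 1) (by omega) (by omega) (by omega)
        constructor
        · intro y hy
          have hyj := hy j (by omega) (by omega)
          have hmem : y j ∈ ((column col j).powersetCard k : Finset (Finset D)) :=
            Finset.mem_powersetCard.mpr ⟨hyj.1, hyj.2⟩
          have hub := (hUi j h1 hjn' y).2 (Set.mem_image_of_mem _ (Finset.mem_coe.mpr hmem))
          rw [Function.update_eq_self] at hub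
          have htail := hih.1 y hy
          rw [hsplit, Finset.sum_insert hnotmem, add_assoc]
          linarith
        · have hMeq := hMi j h1 hjn'
          rw [hsplit, Finset.sum_insert hnotmem, add_assoc, hih.2, hMeq]
  have hA := (key (n - (2 * m + 1)) (2 * m + 1) le_rfl le_rfl (by omega)).1 x hx
  have hB := (key (n - (2 * m + 1)) (2 * m + 1) le_rfl le_rfl (by omega)).2
  have hC := hMfirst x hx
  linarith
end

section
/- (Lemma: posterior variance is bounded below by the noise variance.) For every location y ∈ D and every vector A of locations of D all distinct from y (with pairwise distinct entries), the posterior variance satisfies Σ_{yy|A} := Σ_{yy} − Σ_{yA}Σ_{AA}⁻¹Σ_{Ay} ≥ σ_n². -/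
open Finset

/-! Split the noise `σ_n² I` into the noise at `y` and the noise off `y`, and let `Σ'` be `K` plus
the latter. As `y ∉ A`, the noise at `y` enters `Σ_{yy|A}` only through `Σ_yy`, so
`Σ_{yy|A} = Σ'_{yy|A} + σ_n²`. Now `Σ'_AA = K_AA + σ_n² I` is positive definite, and `Σ'_{yy|A}` is
a diagonal entry of the Schur complement of `Σ'_AA` in the positive semidefinite matrix `Σ'`
restricted to `{y} ∪ A`, hence nonnegative. -/

section

open Matrix

variable {D : Type*}

theorem SigmaMat_eq_add_diagonal [DecidableEq D] (K : D → D → ℝ) (σn2 : ℝ) :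
    SigmaMat K σn2 = of K + diagonal fun _ => σn2 := by
  ext p q
  by_cases hpq : p = q <;> simp [SigmaMat, hpq]

theorem subMat_conjTranspose {Cov : Matrix D D ℝ} (hCov : Cov.IsHermitian) (a s : Finset D) :
    (subMat Cov a s)ᴴ = subMat Cov s a := by
  ext p q
  exact hCov.apply p.1 q.1

theorem subMat_add_diagonal_of_forall_mem_inter [DecidableEq D] (Cov : Matrix D D ℝ)
    {d : D → ℝ} {a s : Finset D} (hd : ∀ x ∈ a ∩ s, d x = 0) :
    subMat (Cov + diagonal d) a s = subMat Cov a s := by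
  ext p q
  by_cases hpq : p.1 = q.1
  · simp [subMat, hpq, hd q.1 (mem_inter.2 ⟨hpq ▸ p.2, q.2⟩)]
  · simp [subMat, hpq]

theorem posDef_subMat_add_diagonal [DecidableEq D] {M : Matrix D D ℝ} (hM : M.PosSemidef)
    {d : D → ℝ} {s : Finset D} (hd : ∀ x ∈ s, 0 < d x) :
    (subMat (M + diagonal d) s s).PosDef := by
  have hsplit : subMat (M + diagonal d) s s = subMat M s s + diagonal fun x : s => d x := by
    ext p q
    by_cases hpq : p = q
    · simp [subMat, hpq]
    · simp [subMat, hpq, Subtype.val_injective.ne hpq]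
  rw [hsplit]
  exact PosDef.posSemidef_add (hM.submatrix _) (PosDef.diagonal fun x => hd x x.2)

theorem postCov_posSemidef [DecidableEq D] {Cov : Matrix D D ℝ} (hCov : Cov.PosSemidef)
    (a : Finset D) {s : Finset D} (hs : (subMat Cov s s).PosDef) :
    (postCov Cov a s).PosSemidef := by
  let := hs.isUnit.invertible
  have hblocks : Cov.submatrix (Sum.elim (↑) (↑)) (Sum.elim (↑) (↑)) =
      fromBlocks (subMat Cov a a) (subMat Cov a s) (subMat Cov a s)ᴴ (subMat Cov s s) := by
    rw [subMat_conjTranspose hCov.isHermitian]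
    ext (i | i) (j | j) <;> rfl
  have hschur := (PosDef.fromBlocks₂₂ _ _ hs).1 (hblocks ▸ hCov.submatrix _)
  rwa [subMat_conjTranspose hCov.isHermitian] at hschur

theorem postVar_nonneg [DecidableEq D] {Cov : Matrix D D ℝ} (hCov : Cov.PosSemidef) (y : D)
    {A : Finset D} (hA : (subMat Cov A A).PosDef) :
    0 ≤ postVar Cov y A :=
  (postCov_posSemidef hCov {y} hA).diag_nonneg

theorem postVar_add_diagonal_single [DecidableEq D] (Cov : Matrix D D ℝ) {y : D} {A : Finset D}
    (hyA : y ∉ A) (c : ℝ) :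
    postVar (Cov + diagonal (Pi.single y c)) y A = postVar Cov y A + c := by
  have hkeep (a s : Finset D) (hy : y ∉ a ∩ s) :
      subMat (Cov + diagonal (Pi.single y c)) a s = subMat Cov a s :=
    subMat_add_diagonal_of_forall_mem_inter Cov fun x hx => by
      simp [ne_of_mem_of_not_mem hx hy]
  unfold postVar postCov
  rw [hkeep {y} A (by simpa), hkeep A A (by simpa), hkeep A {y} (by simpa)]
  simp only [Matrix.sub_apply, subMat, of_apply, Matrix.add_apply, diagonal_apply_eq,
    Pi.single_eq_same]
  ring

end

theorem posterior_variance_ge_noise_general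
    {D : Type*} [Fintype D] [DecidableEq D]
    (K : D → D → ℝ) (σn2 : ℝ)
    (hn : 0 < σn2)
    (hKpsd : (Matrix.of K).PosSemidef)
    (y : D) (A : Finset D) (hyA : y ∉ A) :
    σn2 ≤ postVar (SigmaMat K σn2) y A := by
  set noiseOffY : D → ℝ := Function.update (fun _ => σn2) y 0
  have hnoise : (fun _ => σn2) = fun x => noiseOffY x + (Pi.single y σn2 : D → ℝ) x := by
    funext x
    by_cases hxy : x = y <;> simp [noiseOffY, hxy]
  have hnoise_nonneg (x : D) : 0 ≤ noiseOffY x := by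
    by_cases hxy : x = y <;> simp [noiseOffY, hxy, hn.le]
  have hnoise_pos (x : D) (hx : x ∈ A) : 0 < noiseOffY x := by
    simp [noiseOffY, ne_of_mem_of_not_mem hx hyA, hn]
  rw [SigmaMat_eq_add_diagonal, hnoise, ← Matrix.diagonal_add, ← add_assoc,
    postVar_add_diagonal_single _ hyA, le_add_iff_nonneg_left]
  exact postVar_nonneg (hKpsd.add (Matrix.posSemidef_diagonal_iff.2 hnoise_nonneg)) y
    (posDef_subMat_add_diagonal hKpsd hnoise_pos)

/-- **Lemma (posterior variance is bounded below by the noise variance).** -/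
theorem posterior_variance_ge_noise
    {D : Type*} [Fintype D] [DecidableEq D]
    (K : D → D → ℝ) (σn2 : ℝ)
    (hn : 0 < σn2)
    (hKsymm : ∀ p q : D, K p q = K q p)
    (hKpsd : (Matrix.of K).PosSemidef)
    (y : D) (A : Finset D) (hyA : y ∉ A) :
    σn2 ≤ postVar (SigmaMat K σn2) y A :=
  posterior_variance_ge_noise_general K σn2 hn hKpsd y A hyA
end

section
/- (Variance-reduction bound for distant locations.) Let p and q be single locations whose column indices differ by at least m+1, and let A be any vector of locations with p, q and the entries of A pairwise distinct. Then Σ_{pp|A} − Σ_{pp|(A,q)} ≤ σ_s²·ξ² / (1 + η), where (A,q) denotes the vector A with q appended. -/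
open Finset

lemma postVar_empty_s6 {D : Type*} [DecidableEq D] (Cov : Matrix D D ℝ) (y : D) :
    postVar Cov y ∅ = Cov y y := by
  simp [postVar, postCov, subMat, Matrix.mul_apply]

lemma subMat_singleton_inv {D : Type*} [DecidableEq D] (Cov : Matrix D D ℝ) (q : D)
    (hc : Cov q q ≠ 0) :
    (subMat Cov {q} {q})⁻¹ = Matrix.of (fun _ _ => (Cov q q)⁻¹) := by
  apply Matrix.inv_eq_right_inv
  ext i j
  have hi : (i : D) = q := Finset.mem_singleton.mp i.2
  have hj : (j : D) = q := Finset.mem_singleton.mp j.2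
  have hij : i = j := Subtype.ext (hi.trans hj.symm)
  simp [Matrix.mul_apply, subMat, Finset.sum_attach, hi, hij, Matrix.one_apply,
    mul_inv_cancel₀ hc, Finset.univ_unique]
  simp_all [Matrix.one_apply]

lemma postVar_singleton_s6 {D : Type*} [DecidableEq D] (Cov : Matrix D D ℝ) (p q : D)
    (hc : Cov q q ≠ 0) :
    postVar Cov p {q} = Cov p p - Cov p q * (Cov q q)⁻¹ * Cov q p := by
  unfold postVar postCov
  rw [subMat_singleton_inv Cov q hc]
  simp [Matrix.mul_apply, subMat, Matrix.sub_apply]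

/-- **Variance-reduction bound for distant locations.** -/
theorem variance_reduction_bound
    {D : Type*} [Fintype D] [DecidableEq D]
    (r n k m : ℕ) (col : D → ℕ)
    (K : D → D → ℝ) (σs2 σn2 l1 ξ : ℝ)
    (hr : 1 ≤ r) (hk1 : 1 ≤ k) (hkr : k ≤ r) (hm : 1 ≤ m)
    (hs : 0 < σs2) (hn : 0 < σn2) (hl1 : 0 < l1)
    (hξ : ξ = Real.exp (-((m : ℝ) + 1) ^ 2 / (2 * l1 ^ 2)))
    (hKsymm : ∀ p q : D, K p q = K q p)
    (hKpsd : (Matrix.of K).PosSemidef)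
    (hKdiag : ∀ p : D, K p p = σs2)
    (hcol : ∀ p : D, 1 ≤ col p ∧ col p ≤ n)
    (hcolcard : ∀ i : ℕ, 1 ≤ i → i ≤ n → (column col i).card = r)
    (hdecay : ∀ p q : D, (m : ℤ) + 1 ≤ |(col p : ℤ) - (col q : ℤ)| → |K p q| ≤ σs2 * ξ)
    (hsub : ∀ (p q : D) (A : Finset D), p ∉ A → q ∉ A → p ≠ q →
      postVar (SigmaMat K σn2) p A - postVar (SigmaMat K σn2) p (insert q A)
        ≤ postVar (SigmaMat K σn2) p ∅ - postVar (SigmaMat K σn2) p {q})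
    (p q : D) (A : Finset D)
    (hfar : (m : ℤ) + 1 ≤ |(col p : ℤ) - (col q : ℤ)|)
    (hpA : p ∉ A) (hqA : q ∉ A) (hpq : p ≠ q) :
    postVar (SigmaMat K σn2) p A - postVar (SigmaMat K σn2) p (insert q A)
      ≤ σs2 * ξ ^ 2 / (1 + σn2 / σs2) := by
  have key := hsub p q A hpA hqA hpq
  have hcq : SigmaMat K σn2 q q = σs2 + σn2 := by
    simp [SigmaMat, hKdiag]
  have hcq0 : SigmaMat K σn2 q q ≠ 0 := by rw [hcq]; positivity
  have hKpq : SigmaMat K σn2 p q = K p q := by simp [SigmaMat, hpq]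
  have hKqp : SigmaMat K σn2 q p = K p q := by
    simp [SigmaMat, Ne.symm hpq, hKsymm q p]
  have h1 := postVar_empty_s6 (SigmaMat K σn2) p
  have h2 := postVar_singleton_s6 (SigmaMat K σn2) p q hcq0
  have hξpos : 0 < ξ := by rw [hξ]; exact Real.exp_pos _
  have hKb : |K p q| ≤ σs2 * ξ := hdecay p q hfar
  have hsq : K p q * K p q ≤ (σs2 * ξ)^2 := by
    have := sq_abs (K p q)
    nlinarith [abs_nonneg (K p q)]
  have hden : 0 < σs2 + σn2 := by positivity
  calc postVar (SigmaMat K σn2) p A - postVar (SigmaMat K σn2) p (insert q A)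
      ≤ postVar (SigmaMat K σn2) p ∅ - postVar (SigmaMat K σn2) p {q} := key
    _ = K p q * K p q / (σs2 + σn2) := by
        rw [h1, h2, hKpq, hKqp, hcq]; ring
    _ ≤ (σs2 * ξ)^2 / (σs2 + σn2) := by
        gcongr
    _ = σs2 * ξ ^ 2 / (1 + σn2 / σs2) := by
        field_simp
end
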